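/- Let ν > 3/2 and c ≥ 0. Suppose Y : ℝ³ → ℝ³ is a smooth vector field satisfying L Y = 0 on all of ℝ³, and suppose that for every x ∈ ℝ³ with x ≠ 0 one has ‖Y(x)‖ ≤ c‖x‖^{1−ν} and ‖DY(x)‖ ≤ c‖x‖^{−ν}, where DY denotes the (total) derivative of Y. Then Y is a conformal Killing vector field: (𝒟Y)_{ab}(x) = 0 for all x ∈ ℝ³ and all a, b. -/

import Mathlib

open Metric Set

noncomputable section

/-- Euclidean 3-space. -/
abbrev E3 : Type := EuclideanSpace ℝ (Fin 3)

/-- Partial derivative `∂_a g` in the direction of the `a`-th coordinate vector. -/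
def pd (a : Fin 3) (g : E3 → ℝ) : E3 → ℝ :=
  fun x => fderiv ℝ g x (EuclideanSpace.single a 1)

/-- The Euclidean conformal Killing operator
`(𝒟X)_{ab} = ½(∂_a X_b + ∂_b X_a) − (1/3)δ_{ab} Σ_c ∂_c X_c`. -/
def cko (X : E3 → E3) (a b : Fin 3) : E3 → ℝ := fun x =>
  (pd a (fun y => X y b) x + pd b (fun y => X y a) x) / 2 -
    (if a = b then (1 : ℝ) else 0) / 3 * ∑ c : Fin 3, pd c (fun y => X y c) x

/-- The Euclidean vector Laplacian `(L X)_a = −Σ_b ∂_b (𝒟X)_{ab}`. -/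
def vecLap (X : E3 → E3) : E3 → E3 := fun x =>
  (EuclideanSpace.equiv (Fin 3) ℝ).symm fun a => -∑ b : Fin 3, pd b (cko X a b) x

/-!
With the flux `F_b := ∑_a Y_a (𝒟Y)_{ab}`, symmetry and trace-freeness of `𝒟Y` give
`div F = |𝒟Y|² - ⟪Y, LY⟫ = |𝒟Y|²`. By the divergence theorem on the cube `[-R, R]³`,
the integral of `|𝒟Y|²` over the cube is a boundary flux; there `|F| ≲ c² R^{1-2ν}`
on a surface of area `~ R²`, so the integral is `O(R^{3-2ν}) → 0` as `ν > 3/2`.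
A continuous nonnegative function whose integrals over all cubes vanish is zero.
-/

open Filter Topology MeasureTheory

theorem abs_integral_divergence_Icc_le {n : ℕ} {f : Fin (n + 1) → (Fin (n + 1) → ℝ) → ℝ}
    {f' : Fin (n + 1) → (Fin (n + 1) → ℝ) → (Fin (n + 1) → ℝ) →L[ℝ] ℝ} {R M : ℝ}
    (hR : 0 ≤ R) (hf : ∀ i x, HasFDerivAt (f i) (f' i x) x)
    (hi : IntegrableOn (fun x => ∑ i, f' i x (Pi.single i 1)) (Icc (fun _ => -R) fun _ => R))
    (hM : ∀ i x, |x i| = R → |f i x| ≤ M) :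
    |∫ x in Icc (fun _ => -R) (fun _ => R), ∑ i, f' i x (Pi.single i 1)| ≤
      2 * (n + 1) * M * (2 * R) ^ n := by
  have hle : (fun _ : Fin (n + 1) => -R) ≤ fun _ => R := fun _ => by linarith
  rw [integral_divergence_of_hasFDerivAt_off_countable' _ _ hle f f' ∅ countable_empty
    (fun i => (continuous_iff_continuousAt.2 fun x => (hf i x).continuousAt).continuousOn)
    (fun x _ i => hf i x) hi]
  have hface : ∀ i r, |r| = R →
      |∫ y in Icc ((fun _ => -R) ∘ i.succAbove) ((fun _ => R) ∘ i.succAbove),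
        f i (i.insertNth r y)| ≤ M * (2 * R) ^ n := by
    intro i r hr
    have hvol : volume.real (Icc ((fun _ : Fin (n + 1) => -R) ∘ i.succAbove)
        ((fun _ => R) ∘ i.succAbove)) = (2 * R) ^ n := by
      have hle' : (fun _ => -R) ∘ i.succAbove ≤ (fun _ => R) ∘ i.succAbove :=
        fun j => hle (i.succAbove j)
      rw [measureReal_def, Real.volume_Icc_pi_toReal hle']
      simp only [Function.comp_apply, Finset.prod_const, Finset.card_univ, Fintype.card_fin]
      ring
    rw [← hvol, ← Real.norm_eq_abs]
    exact norm_setIntegral_le_of_norm_le_const (μ := volume) isCompact_Icc.measure_lt_top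
      fun y _ => (Real.norm_eq_abs _).trans_le (hM i (i.insertNth r y) (by simpa using hr))
  calc _ ≤ ∑ i : Fin (n + 1), 2 * (M * (2 * R) ^ n) := by
        refine (Finset.abs_sum_le_sum_abs _ _).trans (Finset.sum_le_sum fun i _ => ?_)
        refine (abs_sub _ _).trans ?_
        linarith [hface i R (abs_of_nonneg hR), hface i (-R) (by rw [abs_neg, abs_of_nonneg hR])]
    _ = _ := by
        simp only [Finset.sum_const, Finset.card_univ, Fintype.card_fin, nsmul_eq_mul]
        push_cast
        ring

theorem eq_zero_of_tendsto_setIntegral_Icc {ι : Type*} [Fintype ι] {f : (ι → ℝ) → ℝ}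
    (hf : Continuous f) (hf0 : ∀ x, 0 ≤ f x)
    (h : Tendsto (fun R => ∫ x in Icc (fun _ => -R) (fun _ => R), f x) atTop (𝓝 0)) :
    f = 0 := by
  ext x
  set R := ‖x‖ + 1
  set U : Set (ι → ℝ) := Set.pi univ fun _ => Ioo (-R) R
  have hxU : x ∈ U := fun i _ => by
    have := norm_le_pi_norm x i
    rw [Real.norm_eq_abs] at this
    exact abs_lt.1 (by linarith)
  have hUIcc : U ⊆ Icc (fun _ => -R) fun _ => R :=
    fun y hy => ⟨fun i => (hy i trivial).1.le, fun i => (hy i trivial).2.le⟩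
  have hint : ∀ R, IntegrableOn f (Icc (fun _ => -R) fun _ => R) :=
    fun R => hf.continuousOn.integrableOn_compact isCompact_Icc
  have hIR : ∫ y in Icc (fun _ => -R) (fun _ => R), f y = 0 := by
    refine le_antisymm (ge_of_tendsto h (eventually_atTop.2 ⟨R, fun R' hR' => ?_⟩))
      (setIntegral_nonneg measurableSet_Icc fun y _ => hf0 y)
    refine setIntegral_mono_set (hint R') (Eventually.of_forall hf0) (Eventually.of_forall ?_)
    exact Icc_subset_Icc (fun _ => by simpa using hR') (fun _ => hR')
  rw [setIntegral_eq_zero_iff_of_nonneg_ae (Eventually.of_forall hf0) (hint R)] at hIR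
  exact Measure.eqOn_open_of_ae_eq (ae_restrict_of_ae_restrict_of_subset hUIcc hIR)
    (isOpen_set_pi finite_univ fun _ _ => isOpen_Ioo) hf.continuousOn continuousOn_const hxU

def ckoFlux (X : E3 → E3) (b : Fin 3) : E3 → ℝ := fun x => ∑ a : Fin 3, X x a * cko X a b x

def ckoNormSq (X : E3 → E3) : E3 → ℝ := fun x => ∑ a : Fin 3, ∑ b : Fin 3, cko X a b x ^ 2

theorem ckoNormSq_nonneg (X : E3 → E3) (x : E3) : 0 ≤ ckoNormSq X x :=
  Finset.sum_nonneg fun _ _ => Finset.sum_nonneg fun _ _ => sq_nonneg _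

theorem ckoNormSq_eq_zero_iff {X : E3 → E3} {x : E3} :
    ckoNormSq X x = 0 ↔ ∀ a b, cko X a b x = 0 := by
  simp [ckoNormSq, Finset.sum_eq_zero_iff_of_nonneg, sq_nonneg, Finset.sum_nonneg]

section Smoothness

variable {n : WithTop ℕ∞}

theorem ContDiff.pd {g : E3 → ℝ} (hg : ContDiff ℝ (n + 1) g) (a : Fin 3) :
    ContDiff ℝ n (pd a g) :=
  (hg.fderiv_right le_rfl).clm_apply contDiff_const

theorem ContDiff.cko {X : E3 → E3} (hX : ContDiff ℝ (n + 1) X) (a b : Fin 3) :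
    ContDiff ℝ n (cko X a b) := by
  have hX' : ∀ c, ContDiff ℝ (n + 1) fun y => X y c :=
    fun c => (EuclideanSpace.proj (𝕜 := ℝ) c).contDiff.comp hX
  exact ((((hX' b).pd a).add ((hX' a).pd b)).div_const 2).sub
    (contDiff_const.mul (ContDiff.sum fun c _ => (hX' c).pd c))

theorem continuous_ckoNormSq {X : E3 → E3} (hX : ContDiff ℝ 1 X) : Continuous (ckoNormSq X) :=
  continuous_finsetSum _ fun a _ => continuous_finsetSum _ fun b _ =>
    ((hX.cko (n := 0) a b).continuous).pow 2

end Smoothness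

section Bounds

variable {X : E3 → E3} {x : E3}

theorem pd_apply_eq_fderiv (hX : DifferentiableAt ℝ X x) (a b : Fin 3) :
    pd a (fun y => X y b) x = fderiv ℝ X x (EuclideanSpace.single a 1) b := by
  have h : HasFDerivAt (fun y => X y b) ((EuclideanSpace.proj b).comp (fderiv ℝ X x)) x :=
    (EuclideanSpace.proj (𝕜 := ℝ) b).hasFDerivAt.comp x hX.hasFDerivAt
  simp [pd, h.fderiv]

theorem abs_pd_le_norm_fderiv (hX : DifferentiableAt ℝ X x) (a b : Fin 3) :
    |pd a (fun y => X y b) x| ≤ ‖fderiv ℝ X x‖ := by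
  rw [pd_apply_eq_fderiv hX, ← Real.norm_eq_abs]
  calc _ ≤ ‖fderiv ℝ X x (EuclideanSpace.single a 1)‖ := PiLp.norm_apply_le _ b
    _ ≤ ‖fderiv ℝ X x‖ * ‖EuclideanSpace.single a (1 : ℝ)‖ :=
        (fderiv ℝ X x).le_opNorm _
    _ = ‖fderiv ℝ X x‖ := by simp

theorem abs_cko_le (hX : DifferentiableAt ℝ X x) (a b : Fin 3) :
    |cko X a b x| ≤ 2 * ‖fderiv ℝ X x‖ := by
  have h := abs_pd_le_norm_fderiv hX
  have htrace : |∑ c : Fin 3, pd c (fun y => X y c) x| ≤ 3 * ‖fderiv ℝ X x‖ := by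
    refine (Finset.abs_sum_le_sum_abs _ _).trans ?_
    simpa using Finset.sum_le_sum fun c (_ : c ∈ Finset.univ) => h c c
  have hδ : |(if a = b then (1 : ℝ) else 0) / 3| ≤ 1 / 3 := by split_ifs <;> norm_num
  set D := ‖fderiv ℝ X x‖
  calc |cko X a b x| ≤ (|pd a (fun y => X y b) x| + |pd b (fun y => X y a) x|) / 2 +
        |(if a = b then (1 : ℝ) else 0) / 3| * |∑ c : Fin 3, pd c (fun y => X y c) x| := by
        rw [cko, ← abs_mul]
        refine (abs_sub _ _).trans (add_le_add ?_ le_rfl)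
        rw [abs_div, abs_two]
        gcongr
        exact abs_add_le _ _
    _ ≤ (D + D) / 2 + 1 / 3 * (3 * D) := by
        gcongr
        exacts [h a b, h b a]
    _ = 2 * D := by ring

theorem abs_ckoFlux_le (hX : DifferentiableAt ℝ X x) (b : Fin 3) :
    |ckoFlux X b x| ≤ 6 * ‖X x‖ * ‖fderiv ℝ X x‖ := by
  refine (Finset.abs_sum_le_sum_abs _ _).trans ?_
  calc _ ≤ ∑ _a : Fin 3, ‖X x‖ * (2 * ‖fderiv ℝ X x‖) := by
        refine Finset.sum_le_sum fun a _ => ?_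
        rw [abs_mul]
        exact mul_le_mul (PiLp.norm_apply_le (X x) a) (abs_cko_le hX a b) (abs_nonneg _)
          (norm_nonneg _)
    _ = _ := by simp only [Finset.sum_const, Finset.card_univ, Fintype.card_fin]; ring

end Bounds

section Divergence

variable {X : E3 → E3} {x : E3}

theorem vecLap_apply (X : E3 → E3) (x : E3) (a : Fin 3) :
    vecLap X x a = -∑ b : Fin 3, pd b (cko X a b) x := rfl

theorem pd_mul {f g : E3 → ℝ} (hf : DifferentiableAt ℝ f x) (hg : DifferentiableAt ℝ g x)
    (a : Fin 3) : pd a (fun y => f y * g y) x = pd a f x * g x + f x * pd a g x := by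
  simp only [pd, fderiv_fun_mul hf hg, add_apply, smul_apply, smul_eq_mul]
  ring

theorem pd_sum {ι : Type*} {s : Finset ι} {f : ι → E3 → ℝ}
    (hf : ∀ i ∈ s, DifferentiableAt ℝ (f i) x) (a : Fin 3) :
    pd a (fun y => ∑ i ∈ s, f i y) x = ∑ i ∈ s, pd a (f i) x := by
  simp only [pd, fderiv_fun_sum hf, sum_apply]

theorem sum_pd_mul_cko (X : E3 → E3) (x : E3) :
    ∑ a : Fin 3, ∑ b : Fin 3, pd b (fun y => X y a) x * cko X a b x = ckoNormSq X x := by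
  simp only [ckoNormSq, cko, Fin.sum_univ_three, Fin.isValue, Fin.reduceEq, if_true, if_false]
  ring

theorem sum_pd_ckoFlux (hX : ContDiff ℝ 2 X) (x : E3) :
    ∑ b : Fin 3, pd b (ckoFlux X b) x = ckoNormSq X x - inner ℝ (X x) (vecLap X x) := by
  have hXa : ∀ a, DifferentiableAt ℝ (fun y => X y a) x := fun a =>
    ((EuclideanSpace.proj (𝕜 := ℝ) a).contDiff.comp hX).differentiable (by norm_num) x
  have hcko : ∀ a b, DifferentiableAt ℝ (cko X a b) x := fun a b =>
    ((hX.cko (n := 1) a b).differentiable one_ne_zero) x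
  have hflux : ∀ b, pd b (ckoFlux X b) x =
      ∑ a : Fin 3, (pd b (fun y => X y a) x * cko X a b x + X x a * pd b (cko X a b) x) :=
    fun b => (pd_sum (fun a _ => (hXa a).mul (hcko a b)) b).trans
      (Finset.sum_congr rfl fun a _ => pd_mul (hXa a) (hcko a b) b)
  simp only [hflux, Finset.sum_add_distrib, PiLp.inner_apply, vecLap_apply,
    RCLike.inner_apply, conj_trivial, neg_mul, Finset.sum_mul, Finset.sum_neg_distrib,
    sub_neg_eq_add]
  rw [Finset.sum_comm, sum_pd_mul_cko, add_right_inj]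
  simp only [mul_comm]
  exact Finset.sum_comm

end Divergence

section Decay

variable {X : E3 → E3} {ν c R : ℝ}

theorem abs_ckoFlux_le_of_decay (hν : 1 / 2 ≤ ν) (hX : Differentiable ℝ X)
    (hb1 : ∀ x : E3, x ≠ 0 → ‖X x‖ ≤ c * ‖x‖ ^ (1 - ν))
    (hb2 : ∀ x : E3, x ≠ 0 → ‖fderiv ℝ X x‖ ≤ c * ‖x‖ ^ (-ν))
    (hR : 0 < R) {x : E3} (hx : R ≤ ‖x‖) (b : Fin 3) :
    |ckoFlux X b x| ≤ 6 * c ^ 2 * R ^ (1 - 2 * ν) := by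
  have hx0 : 0 < ‖x‖ := hR.trans_le hx
  have hxne : x ≠ 0 := norm_pos_iff.1 hx0
  calc |ckoFlux X b x| ≤ 6 * ‖X x‖ * ‖fderiv ℝ X x‖ := abs_ckoFlux_le (hX x) b
    _ ≤ 6 * (c * ‖x‖ ^ (1 - ν)) * (c * ‖x‖ ^ (-ν)) := by
        have := (norm_nonneg _).trans (hb1 x hxne)
        gcongr
        exacts [hb1 x hxne, hb2 x hxne]
    _ = 6 * c ^ 2 * ‖x‖ ^ (1 - 2 * ν) := by
        rw [show 1 - 2 * ν = (1 - ν) + -ν by ring, Real.rpow_add hx0]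
        ring
    _ ≤ 6 * c ^ 2 * R ^ (1 - 2 * ν) :=
        mul_le_mul_of_nonneg_left (Real.rpow_le_rpow_of_nonpos hR hx (by linarith))
          (by positivity)

-- Mathlib's divergence theorem and boxes `Icc a b` live on `Fin (n + 1) → ℝ`, not on `E3`.
def toE3 : (Fin 3 → ℝ) ≃L[ℝ] E3 := (EuclideanSpace.equiv (Fin 3) ℝ).symm

theorem setIntegral_ckoNormSq_le (hν : 1 / 2 ≤ ν) (hX : ContDiff ℝ 2 X)
    (hL : ∀ x : E3, vecLap X x = 0)
    (hb1 : ∀ x : E3, x ≠ 0 → ‖X x‖ ≤ c * ‖x‖ ^ (1 - ν))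
    (hb2 : ∀ x : E3, x ≠ 0 → ‖fderiv ℝ X x‖ ≤ c * ‖x‖ ^ (-ν)) (hR : 0 < R) :
    ∫ p in Icc (fun _ => -R) (fun _ => R), ckoNormSq X (toE3 p) ≤
      144 * c ^ 2 * R ^ (3 - 2 * ν) := by
  have hX1 : ContDiff ℝ 1 X := hX.of_le one_le_two
  have hflux : ∀ b, Differentiable ℝ (ckoFlux X b) := fun b =>
    (ContDiff.sum fun a _ => ((EuclideanSpace.proj (𝕜 := ℝ) a).contDiff.comp hX1).mul
      (hX.cko (n := 1) a b)).differentiable one_ne_zero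
  have hdiv : ∀ p, ∑ b : Fin 3, (fderiv ℝ (ckoFlux X b) (toE3 p)).comp
      (toE3 : (Fin 3 → ℝ) →L[ℝ] E3) (Pi.single b 1) = ckoNormSq X (toE3 p) := fun p => by
    have h := sum_pd_ckoFlux hX (toE3 p)
    rw [hL, inner_zero_right, sub_zero] at h
    exact h
  have hbound := abs_integral_divergence_Icc_le (f := fun b p => ckoFlux X b (toE3 p))
    (M := 6 * c ^ 2 * R ^ (1 - 2 * ν)) hR.le
    (fun b p => (hflux b _).hasFDerivAt.comp p toE3.hasFDerivAt)
    (((continuous_ckoNormSq hX1).comp toE3.continuous).integrableOn_Icc.congr_fun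
      (fun p _ => (hdiv p).symm) measurableSet_Icc)
    (fun b p hp => abs_ckoFlux_le_of_decay hν (hX1.differentiable one_ne_zero) hb1 hb2 hR
      (hp ▸ (PiLp.norm_apply_le (toE3 p) b)) b)
  simp only [hdiv] at hbound
  calc _ ≤ _ := le_abs_self _
    _ ≤ _ := hbound
    _ = 144 * c ^ 2 * R ^ (3 - 2 * ν) := by
      rw [show 3 - 2 * ν = (1 - 2 * ν) + (2 : ℕ) by push_cast; ring, Real.rpow_add hR,
        Real.rpow_natCast]
      push_cast
      ring

end Decay

theorem vecLap_kernel_decay_is_conformal_killing_general (ν c : ℝ) (hν : 3 / 2 < ν)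
    (Y : E3 → E3) (hY : ContDiff ℝ (⊤ : ℕ∞) Y) (hL : ∀ x : E3, vecLap Y x = 0)
    (hb1 : ∀ x : E3, x ≠ 0 → ‖Y x‖ ≤ c * ‖x‖ ^ (1 - ν))
    (hb2 : ∀ x : E3, x ≠ 0 → ‖fderiv ℝ Y x‖ ≤ c * ‖x‖ ^ (-ν)) :
    ∀ x : E3, ∀ a b : Fin 3, cko Y a b x = 0 := by
  have hY2 : ContDiff ℝ 2 Y := hY.of_le (WithTop.coe_le_coe.2 le_top)
  have hdecay : Tendsto (fun R : ℝ => 144 * c ^ 2 * R ^ (3 - 2 * ν)) atTop (𝓝 0) := by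
    simpa using (tendsto_rpow_neg_atTop (by linarith : 0 < 2 * ν - 3)).const_mul (144 * c ^ 2)
  have hzero : (fun p => ckoNormSq Y (toE3 p)) = 0 :=
    eq_zero_of_tendsto_setIntegral_Icc ((continuous_ckoNormSq (hY2.of_le one_le_two)).comp
      toE3.continuous) (fun p => ckoNormSq_nonneg Y _)
      (tendsto_of_tendsto_of_tendsto_of_le_of_le' tendsto_const_nhds hdecay
        (Eventually.of_forall fun R => setIntegral_nonneg measurableSet_Icc
          fun p _ => ckoNormSq_nonneg Y _)
        ((eventually_gt_atTop 0).mono fun R hR =>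
          setIntegral_ckoNormSq_le (by linarith) hY2 hL hb1 hb2 hR))
  intro x
  exact ckoNormSq_eq_zero_iff.1 (congrFun hzero (toE3.symm x))

/-- a smooth vector field on all of `ℝ³` with `L Y = 0` and decay
`‖Y(x)‖ ≤ c‖x‖^{1−ν}`, `‖DY(x)‖ ≤ c‖x‖^{−ν}` (for `ν > 3/2`) is conformal Killing. -/
theorem vecLap_kernel_decay_is_conformal_killing (ν c : ℝ) (hν : 3 / 2 < ν) (hc : 0 ≤ c)
    (Y : E3 → E3) (hY : ContDiff ℝ (⊤ : ℕ∞) Y) (hL : ∀ x : E3, vecLap Y x = 0)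
    (hb1 : ∀ x : E3, x ≠ 0 → ‖Y x‖ ≤ c * ‖x‖ ^ (1 - ν))
    (hb2 : ∀ x : E3, x ≠ 0 → ‖fderiv ℝ Y x‖ ≤ c * ‖x‖ ^ (-ν)) :
    ∀ x : E3, ∀ a b : Fin 3, cko Y a b x = 0 :=
  vecLap_kernel_decay_is_conformal_killing_general ν c hν Y hY hL hb1 hb2
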